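/- arXiv:1810.13129 — 3 statements merged into one kernel-verified Lean document; each statement's English description precedes it below -/
import Mathlib

section
/- If two variables a and b of a propositional formula φ have equivalent logical influence, a ≡ b, then their influence weights are equal: IW_φ(a) = IW_φ(b). -/
/-- Propositional formulas over a set `V` of variables, built from variables,
the constants ⊤ (`tru`) and ⊥ (`fls`), negation, conjunction and disjunction. -/
inductive PropForm (V : Type) : Type where
  | tru : PropForm V
  | fls : PropForm V
  | var : V → PropForm V
  | neg : PropForm V → PropForm V
  | conj : PropForm V → PropForm V → PropForm V
  | disj : PropForm V → PropForm V → PropForm V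
  deriving DecidableEq

/-- The three-valued truth domain B₃ = {⊤, ⊥, ?}. -/
inductive B3 : Type where
  | top : B3
  | bot : B3
  | unk : B3
  deriving DecidableEq

instance instFintypeB3 : Fintype B3 :=
  ⟨{B3.top, B3.bot, B3.unk}, fun x => by cases x <;> simp⟩

namespace PropForm

variable {V : Type} [DecidableEq V]

/-- Simplifying negation: ¬⊤ = ⊥, ¬⊥ = ⊤. -/
def sneg : PropForm V → PropForm V
  | tru => fls
  | fls => tru
  | φ => neg φ

/-- Simplifying conjunction: ⊤∧ψ = ψ, ⊥∧ψ = ⊥ (and symmetrically). -/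
def sconj : PropForm V → PropForm V → PropForm V
  | tru, ψ => ψ
  | fls, _ => fls
  | φ, tru => φ
  | _, fls => fls
  | φ, ψ => conj φ ψ

/-- Simplifying disjunction: ⊤∨ψ = ⊤, ⊥∨ψ = ψ (and symmetrically). -/
def sdisj : PropForm V → PropForm V → PropForm V
  | tru, _ => tru
  | fls, ψ => ψ
  | _, tru => tru
  | φ, fls => φ
  | φ, ψ => disj φ ψ

/-- `prog(φ, σ)`: substitute the definite truth values (⊤ or ⊥) assigned by the
three-valued assignment `σ` and apply the standard Boolean simplification rules,
leaving variables with value ? untouched. -/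
def progAssign (σ : V → B3) : PropForm V → PropForm V
  | tru => tru
  | fls => fls
  | var v =>
      match σ v with
      | B3.top => tru
      | B3.bot => fls
      | B3.unk => var v
  | neg φ => sneg (progAssign σ φ)
  | conj φ ψ => sconj (progAssign σ φ) (progAssign σ ψ)
  | disj φ ψ => sdisj (progAssign σ φ) (progAssign σ ψ)

/-- `prog(φ, a = v)` for a definite truth value `v` (`true` = ⊤, `false` = ⊥):
the simplification under the assignment setting `a` to `v` and all other
variables to ?. -/
def progVar (φ : PropForm V) (a : V) (v : Bool) : PropForm V :=
  progAssign (fun x => if x = a then (if v then B3.top else B3.bot) else B3.unk) φ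

/-- `rename(ψ, a, b)`: replace every occurrence of the variable `a` by `b`. -/
def rename : PropForm V → V → V → PropForm V
  | tru, _, _ => tru
  | fls, _, _ => fls
  | var v, a, b => var (if v = a then b else v)
  | neg φ, a, b => neg (rename φ a b)
  | conj φ ψ, a, b => conj (rename φ a b) (rename ψ a b)
  | disj φ ψ, a, b => disj (rename φ a b) (rename ψ a b)

/-- The set of variables occurring in a formula. -/
def vars : PropForm V → Finset V
  | tru => ∅
  | fls => ∅
  | var v => {v}
  | neg φ => vars φ
  | conj φ ψ => vars φ ∪ vars ψ
  | disj φ ψ => vars φ ∪ vars ψ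

/-- `a ≡ b`: the variables `a` and `b` have equivalent logical influence on the
outcome of `φ`, i.e. `prog(φ, a = ⊥) = rename(prog(φ, b = ⊥), a, b)` and
`prog(φ, a = ⊤) = rename(prog(φ, b = ⊤), a, b)` (syntactic equality). -/
def EquivInfluence (φ : PropForm V) (a b : V) : Prop :=
  progVar φ a false = rename (progVar φ b false) a b ∧
  progVar φ a true = rename (progVar φ b true) a b

/-- The influence weight `IW_φ(a) = f_a / C_{a = ?}`, where `C_{a = ?}` is the
number of three-valued assignments `σ` with `σ a = ?` and `f_a` is the number of
such assignments for which `a` occurs in `prog(φ, σ)`. -/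
noncomputable def IW [Fintype V] (φ : PropForm V) (a : V) : ℚ :=
  (Fintype.card {σ : V → B3 // σ a = B3.unk ∧ a ∈ vars (progAssign σ φ)} : ℚ) /
  (Fintype.card {σ : V → B3 // σ a = B3.unk} : ℚ)

end PropForm

/-!
Precomposition with the transposition `(a b)` is a bijection from the assignments with
`σ a = ?` onto those with `σ b = ?`, so it suffices that `a` occurs in `prog(φ, σ)` iff `b`
occurs in `prog(φ, σ ∘ (a b))`. Simplification composes (simplifying under `τ` and then
under `σ` is simplifying under `τ` overridden by `σ`) and commutes with renaming, so
`a ≡ b` yields `prog(φ, σ[a := v]) = rename(prog(φ, (σ ∘ (a b))[b := v]), a, b)`.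
If `σ b` is definite this says `prog(φ, σ ∘ (a b)) = rename(prog(φ, σ), a, b)`. If
`σ b = ?` then `σ ∘ (a b) = σ`, and we use that fixing an unknown variable leaves
`prog(φ, σ)` unchanged when the variable does not occur in it, and removes it otherwise.
-/

def B3.orElse : B3 → B3 → B3
  | B3.unk, t => t
  | s, _ => s

@[simp] def B3.ofBool : Bool → B3
  | true => B3.top
  | false => B3.bot

lemma Equiv.comp_swap_eq_self {α β : Type*} [DecidableEq α] {f : α → β} {a b : α}
    (h : f a = f b) : f ∘ Equiv.swap a b = f := by
  funext x
  simp only [Function.comp_apply, Equiv.swap_apply_def]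
  split_ifs <;> simp_all

namespace PropForm

variable {V : Type}

section Simplification

@[simp] lemma sconj_tru_left (Y : PropForm V) : sconj tru Y = Y := by cases Y <;> rfl
@[simp] lemma sconj_fls_left (Y : PropForm V) : sconj fls Y = fls := by cases Y <;> rfl
@[simp] lemma sconj_tru_right (X : PropForm V) : sconj X tru = X := by cases X <;> rfl
@[simp] lemma sconj_fls_right (X : PropForm V) : sconj X fls = fls := by cases X <;> rfl
@[simp] lemma sdisj_tru_left (Y : PropForm V) : sdisj tru Y = tru := by cases Y <;> rfl
@[simp] lemma sdisj_fls_left (Y : PropForm V) : sdisj fls Y = Y := by cases Y <;> rfl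
@[simp] lemma sdisj_tru_right (X : PropForm V) : sdisj X tru = tru := by cases X <;> rfl
@[simp] lemma sdisj_fls_right (X : PropForm V) : sdisj X fls = X := by cases X <;> rfl

lemma progAssign_sneg (σ : V → B3) (X : PropForm V) :
    progAssign σ (sneg X) = sneg (progAssign σ X) := by
  cases X <;> rfl

lemma progAssign_sconj (σ : V → B3) (X Y : PropForm V) :
    progAssign σ (sconj X Y) = sconj (progAssign σ X) (progAssign σ Y) := by
  cases X <;> cases Y <;> first | rfl | simp [progAssign]

lemma progAssign_sdisj (σ : V → B3) (X Y : PropForm V) :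
    progAssign σ (sdisj X Y) = sdisj (progAssign σ X) (progAssign σ Y) := by
  cases X <;> cases Y <;> first | rfl | simp [progAssign]

variable [DecidableEq V]

lemma rename_sneg (X : PropForm V) (a b : V) :
    rename (sneg X) a b = sneg (rename X a b) := by
  cases X <;> rfl

lemma rename_sconj (X Y : PropForm V) (a b : V) :
    rename (sconj X Y) a b = sconj (rename X a b) (rename Y a b) := by
  cases X <;> cases Y <;> rfl

lemma rename_sdisj (X Y : PropForm V) (a b : V) :
    rename (sdisj X Y) a b = sdisj (rename X a b) (rename Y a b) := by
  cases X <;> cases Y <;> rfl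

lemma vars_sneg (X : PropForm V) : vars (sneg X) = vars X := by
  cases X <;> rfl

lemma vars_sconj_subset (X Y : PropForm V) : vars (sconj X Y) ⊆ vars X ∪ vars Y := by
  cases X <;> cases Y <;> simp [sconj, vars]

lemma vars_sdisj_subset (X Y : PropForm V) : vars (sdisj X Y) ⊆ vars X ∪ vars Y := by
  cases X <;> cases Y <;> simp [sdisj, vars]

end Simplification

section Assignments

lemma progAssign_progAssign (σ τ : V → B3) (φ : PropForm V) :
    progAssign σ (progAssign τ φ) = progAssign (fun x => (τ x).orElse (σ x)) φ := by
  induction φ with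
  | tru | fls => rfl
  | var v => cases hv : τ v <;> simp [progAssign, hv, B3.orElse]
  | neg φ ih => rw [progAssign, progAssign_sneg, ih]; rfl
  | conj φ ψ ih₁ ih₂ => rw [progAssign, progAssign_sconj, ih₁, ih₂]; rfl
  | disj φ ψ ih₁ ih₂ => rw [progAssign, progAssign_sdisj, ih₁, ih₂]; rfl

variable [DecidableEq V]

lemma progAssign_congr {σ τ : V → B3} {φ : PropForm V} (h : ∀ x ∈ vars φ, σ x = τ x) :
    progAssign σ φ = progAssign τ φ := by
  induction φ with
  | tru | fls => rfl
  | var v => simp [progAssign, h v (by simp [vars])]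
  | neg φ ih => rw [progAssign, progAssign, ih h]
  | conj φ ψ ih₁ ih₂ | disj φ ψ ih₁ ih₂ =>
      rw [progAssign, progAssign, ih₁ fun x hx => h x (by simp [vars, hx]),
        ih₂ fun x hx => h x (by simp [vars, hx])]

lemma vars_progAssign_subset (σ : V → B3) (φ : PropForm V) :
    vars (progAssign σ φ) ⊆ vars φ := by
  induction φ with
  | tru | fls => simp [progAssign, vars]
  | var v => cases h : σ v <;> simp [progAssign, h, vars]
  | neg φ ih => rwa [progAssign, vars_sneg]
  | conj φ ψ ih₁ ih₂ => exact (vars_sconj_subset _ _).trans (Finset.union_subset_union ih₁ ih₂)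
  | disj φ ψ ih₁ ih₂ => exact (vars_sdisj_subset _ _).trans (Finset.union_subset_union ih₁ ih₂)

lemma eq_unk_of_mem_vars_progAssign {σ : V → B3} {φ : PropForm V} {x : V}
    (h : x ∈ vars (progAssign σ φ)) : σ x = B3.unk := by
  induction φ with
  | tru | fls => simp [progAssign, vars] at h
  | var v =>
      cases hv : σ v <;> simp [progAssign, hv, vars] at h
      exact h ▸ hv
  | neg φ ih => rw [progAssign, vars_sneg] at h; exact ih h
  | conj φ ψ ih₁ ih₂ =>
      rcases Finset.mem_union.1 (vars_sconj_subset _ _ h) with h | h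
      exacts [ih₁ h, ih₂ h]
  | disj φ ψ ih₁ ih₂ =>
      rcases Finset.mem_union.1 (vars_sdisj_subset _ _ h) with h | h
      exacts [ih₁ h, ih₂ h]

lemma progVar_eq (φ : PropForm V) (a : V) (v : Bool) :
    progVar φ a v = progAssign (Function.update (fun _ => B3.unk) a (B3.ofBool v)) φ := by
  rw [progVar]
  congr 1
  funext x
  cases v <;> by_cases hx : x = a <;> simp [hx]

lemma progAssign_progVar (σ : V → B3) (φ : PropForm V) (a : V) (v : Bool) :
    progAssign σ (progVar φ a v) = progAssign (Function.update σ a (B3.ofBool v)) φ := by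
  rw [progVar_eq, progAssign_progAssign]
  congr 1
  funext x
  cases v <;> by_cases hx : x = a <;> simp [hx, B3.orElse]

lemma progAssign_update_eq_progAssign_progAssign {σ : V → B3} {a : V} (hσ : σ a = B3.unk)
    (w : B3) (φ : PropForm V) :
    progAssign (Function.update σ a w) φ =
      progAssign (Function.update (fun _ => B3.unk) a w) (progAssign σ φ) := by
  rw [progAssign_progAssign]
  congr 1
  funext x
  by_cases hx : x = a
  · subst hx; simp [hσ, B3.orElse]
  · cases hσx : σ x <;> simp [hx, hσx, B3.orElse]

lemma vars_progAssign_update_subset {σ : V → B3} {a : V} (hσ : σ a = B3.unk) (w : B3)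
    (φ : PropForm V) : vars (progAssign (Function.update σ a w) φ) ⊆ vars (progAssign σ φ) := by
  rw [progAssign_update_eq_progAssign_progAssign hσ]
  exact vars_progAssign_subset _ _

lemma progAssign_update_of_notMem {σ : V → B3} {a : V} (hσ : σ a = B3.unk) (w : B3)
    {φ : PropForm V} (ha : a ∉ vars (progAssign σ φ)) :
    progAssign (Function.update σ a w) φ = progAssign σ φ := by
  have hidem : progAssign σ (progAssign σ φ) = progAssign σ φ := by
    rw [progAssign_progAssign]
    congr 1
    funext x
    cases σ x <;> rfl
  rw [progAssign_update_eq_progAssign_progAssign hσ]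
  refine (progAssign_congr fun x hx => ?_).trans hidem
  rw [eq_unk_of_mem_vars_progAssign hx, Function.update_of_ne (by rintro rfl; exact ha hx)]

end Assignments

section Renaming

variable [DecidableEq V]

lemma progAssign_rename (σ : V → B3) (ψ : PropForm V) (a b : V) :
    progAssign σ (rename ψ a b) = rename (progAssign (Function.update σ a (σ b)) ψ) a b := by
  induction ψ with
  | tru | fls => rfl
  | var v =>
      by_cases hv : v = a
      · subst hv; cases h : σ b <;> simp [progAssign, rename, h]
      · simp only [rename, progAssign, if_neg hv, Function.update_of_ne hv]
        cases σ v <;> simp [rename, hv]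
  | neg φ ih => rw [rename, progAssign, progAssign, ih, rename_sneg]
  | conj φ ψ ih₁ ih₂ => rw [rename, progAssign, progAssign, ih₁, ih₂, rename_sconj]
  | disj φ ψ ih₁ ih₂ => rw [rename, progAssign, progAssign, ih₁, ih₂, rename_sdisj]

lemma mem_vars_rename_self {X : PropForm V} {a b : V} :
    b ∈ vars (rename X a b) ↔ a ∈ vars X ∨ b ∈ vars X := by
  induction X with
  | tru | fls => simp [rename, vars]
  | var v =>
      by_cases hv : v = a
      · simp [rename, vars, hv]
      · simp [rename, vars, hv, Ne.symm hv]
  | neg φ ih => simpa [rename, vars] using ih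
  | conj φ ψ ih₁ ih₂ | disj φ ψ ih₁ ih₂ =>
      simp only [rename, vars, Finset.mem_union, ih₁, ih₂]
      tauto

end Renaming

section EquivInfluence

variable [DecidableEq V] {φ : PropForm V} {a b : V}

lemma EquivInfluence.progAssign_update_eq_rename (h : EquivInfluence φ a b) (σ : V → B3)
    (v : Bool) :
    progAssign (Function.update σ a (B3.ofBool v)) φ =
      rename (progAssign (Function.update (σ ∘ Equiv.swap a b) b (B3.ofBool v)) φ) a b := by
  have hv : progVar φ a v = rename (progVar φ b v) a b := by cases v; exacts [h.1, h.2]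
  rw [← progAssign_progVar, hv, progAssign_rename, progAssign_progVar]
  congr 2
  funext x
  by_cases hxb : x = b
  · simp [hxb]
  · by_cases hxa : x = a
    · subst hxa; simp [hxb, Equiv.swap_apply_left]
    · simp [hxa, hxb, Equiv.swap_apply_of_ne_of_ne hxa hxb]

lemma EquivInfluence.progAssign_comp_swap (h : EquivInfluence φ a b) {σ : V → B3} {v : Bool}
    (hb : σ b = B3.ofBool v) :
    progAssign (σ ∘ Equiv.swap a b) φ = rename (progAssign σ φ) a b := by
  have hswap := h.progAssign_update_eq_rename (σ ∘ Equiv.swap a b) v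
  have hinv : (σ ∘ Equiv.swap a b) ∘ Equiv.swap a b = σ := by ext; simp
  rwa [Function.update_eq_self_iff.2 (by simp [hb]), hinv,
    Function.update_eq_self_iff.2 hb.symm] at hswap

lemma EquivInfluence.mem_vars_progAssign_iff (h : EquivInfluence φ a b) {σ : V → B3}
    (ha : σ a = B3.unk) (hb : σ b = B3.unk) :
    b ∈ vars (progAssign σ φ) ↔ a ∈ vars (progAssign σ φ) := by
  have hfix : progAssign (Function.update σ a B3.top) φ =
      rename (progAssign (Function.update σ b B3.top) φ) a b := by
    simpa [Equiv.comp_swap_eq_self (ha.trans hb.symm)] using h.progAssign_update_eq_rename σ true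
  constructor
  · intro hbX
    by_contra haX
    rw [progAssign_update_of_notMem ha _ haX] at hfix
    rw [hfix, mem_vars_rename_self] at hbX
    rcases hbX with haY | hbY
    · exact haX (vars_progAssign_update_subset hb _ _ haY)
    · simpa using eq_unk_of_mem_vars_progAssign hbY
  · intro haX
    by_contra hbX
    rw [progAssign_update_of_notMem hb _ hbX] at hfix
    have hbY : b ∈ vars (progAssign (Function.update σ a B3.top) φ) := by
      rw [hfix, mem_vars_rename_self]
      exact Or.inl haX
    exact hbX (vars_progAssign_update_subset ha _ _ hbY)

lemma EquivInfluence.mem_vars_progAssign_swap_iff (h : EquivInfluence φ a b) {σ : V → B3}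
    (ha : σ a = B3.unk) :
    b ∈ vars (progAssign (σ ∘ Equiv.swap a b) φ) ↔ a ∈ vars (progAssign σ φ) := by
  have definite : ∀ v, σ b = B3.ofBool v →
      (b ∈ vars (progAssign (σ ∘ Equiv.swap a b) φ) ↔ a ∈ vars (progAssign σ φ)) := by
    intro v hv
    rw [h.progAssign_comp_swap hv, mem_vars_rename_self, or_iff_left]
    intro hbX
    have := eq_unk_of_mem_vars_progAssign hbX
    cases v <;> simp_all
  cases hb : σ b
  · exact definite true hb
  · exact definite false hb
  · rw [Equiv.comp_swap_eq_self (ha.trans hb.symm)]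
    exact h.mem_vars_progAssign_iff ha hb

end EquivInfluence

end PropForm

open PropForm in
/-- If a ≡ b (equivalent logical influence) then IW_φ(a) = IW_φ(b). -/
theorem IW_eq_of_equivInfluence {V : Type} [DecidableEq V] [Fintype V]
    (φ : PropForm V) (a b : V) (h : EquivInfluence φ a b) :
    IW φ a = IW φ b := by
  let e : (V → B3) ≃ (V → B3) := (Equiv.swap a b).arrowCongr (Equiv.refl B3)
  have he : ∀ σ, e σ = σ ∘ Equiv.swap a b := fun σ => by ext; simp [e]
  have hb : ∀ σ : V → B3, e σ b = σ a := fun σ => by simp [he]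
  have hf : Fintype.card {σ : V → B3 // σ a = B3.unk ∧ a ∈ vars (progAssign σ φ)} =
      Fintype.card {σ : V → B3 // σ b = B3.unk ∧ b ∈ vars (progAssign σ φ)} :=
    Fintype.card_congr <| e.subtypeEquiv fun σ => by
      rw [hb, he]
      exact and_congr_right fun hσ => (h.mem_vars_progAssign_swap_iff hσ).symm
  have hC : Fintype.card {σ : V → B3 // σ a = B3.unk} =
      Fintype.card {σ : V → B3 // σ b = B3.unk} :=
    Fintype.card_congr <| e.subtypeEquiv fun σ => by rw [hb]
  rw [IW, IW, hf, hC]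
end

section
/- The converse of the weight-equality property fails: there exist a propositional formula φ and two distinct variables a, b of φ such that IW_φ(a) = IW_φ(b) but a and b do not have equivalent logical influence (¬(a ≡ b)). -/
instance : Fintype B3 :=
  ⟨{B3.top, B3.bot, B3.unk}, fun x => by cases x <;> simp⟩

/-! Take `φ = a ∨ ¬b`. Under `σ` with `σ a = ?`, the variable `a` survives simplification
iff `σ b ≠ ⊥`; under `σ` with `σ b = ?`, the variable `b` survives iff `σ a ≠ ⊤`.
Exchanging `a` and `b` and swapping ⊤ with ⊥ in the assignment matches the two
conditions bijectively, so `IW_φ(a) = IW_φ(b)`. The syntactic relation `≡` does not see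
this duality: setting `a = ⊥` leaves `¬b`, whereas setting `b = ⊥` already gives `⊤`. -/

namespace B3

def dual : B3 → B3
  | top => bot
  | bot => top
  | unk => unk

theorem dual_involutive : Function.Involutive dual := fun x => by
  cases x <;> rfl

@[simp] theorem dual_eq_unk_iff {x : B3} : dual x = unk ↔ x = unk := by
  cases x <;> decide

@[simp] theorem dual_eq_top_iff {x : B3} : dual x = top ↔ x = bot := by
  cases x <;> decide

end B3

namespace PropForm

variable {V : Type} [DecidableEq V] {a b : V}

theorem mem_vars_progAssign_disj_var_neg_var_left (hab : a ≠ b) (σ : V → B3) :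
    a ∈ vars (progAssign σ (disj (var a) (neg (var b)))) ↔ σ a = B3.unk ∧ σ b ≠ B3.bot := by
  simp only [progAssign]
  cases σ a <;> cases σ b <;> simp [sdisj, sneg, vars, hab]

theorem mem_vars_progAssign_disj_var_neg_var_right (hab : a ≠ b) (σ : V → B3) :
    b ∈ vars (progAssign σ (disj (var a) (neg (var b)))) ↔ σ b = B3.unk ∧ σ a ≠ B3.top := by
  simp only [progAssign]
  cases σ a <;> cases σ b <;> simp [sdisj, sneg, vars, hab.symm]

theorem IW_disj_var_neg_var_left_eq_right [Fintype V] (hab : a ≠ b) :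
    IW (disj (var a) (neg (var b))) a = IW (disj (var a) (neg (var b))) b := by
  let e : (V → B3) ≃ (V → B3) := (Equiv.swap a b).arrowCongr B3.dual_involutive.toPerm
  have he_a : ∀ σ, e σ a = B3.dual (σ b) := fun σ => by simp [e]
  have he_b : ∀ σ, e σ b = B3.dual (σ a) := fun σ => by simp [e]
  unfold IW
  congr 2
  · refine Fintype.card_congr (e.subtypeEquiv fun σ => ?_)
    rw [mem_vars_progAssign_disj_var_neg_var_left hab,
      mem_vars_progAssign_disj_var_neg_var_right hab, he_a, he_b]
    simp
  · exact Fintype.card_congr (e.subtypeEquiv fun σ => by simp [he_b])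

theorem progVar_disj_var_neg_var_left_false (hab : a ≠ b) :
    progVar (disj (var a) (neg (var b))) a false = neg (var b) := by
  simp [progVar, progAssign, sdisj, sneg, hab.symm]

theorem progVar_disj_var_neg_var_right_false (hab : a ≠ b) :
    progVar (disj (var a) (neg (var b))) b false = tru := by
  simp [progVar, progAssign, sdisj, sneg, hab]

theorem not_equivInfluence_disj_var_neg_var (hab : a ≠ b) :
    ¬ EquivInfluence (disj (var a) (neg (var b))) a b := fun h => by
  have h_bot := h.1
  rw [progVar_disj_var_neg_var_left_false hab, progVar_disj_var_neg_var_right_false hab,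
    rename] at h_bot
  cases h_bot

end PropForm

open PropForm in
/-- The converse of the weight-equality property fails: there are a formula φ and
two distinct variables a, b with IW_φ(a) = IW_φ(b) but ¬(a ≡ b). -/
theorem converse_of_weight_equality_fails :
    ∃ (n : ℕ) (φ : PropForm (Fin n)) (a b : Fin n),
      a ≠ b ∧ IW φ a = IW φ b ∧ ¬ EquivInfluence φ a b := by
  have h01 : (0 : Fin 2) ≠ 1 := by decide
  exact ⟨2, disj (var 0) (neg (var 1)), 0, 1, h01,
    IW_disj_var_neg_var_left_eq_right h01, not_equivInfluence_disj_var_neg_var h01⟩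
end

section
/- Soundness of LTL formula progression: for every LTL formula φ over atomic propositions AP, every event σ ∈ 2^AP, and every infinite word w over 2^AP, the word w satisfies prog(φ, σ) if and only if the word σ·w (w prefixed by the single event σ) satisfies φ. -/
/-- LTL formulas over atomic propositions `AP`:
φ ::= true | p | ¬φ | φ ∨ φ | X φ | F φ | G φ | φ U φ
(conjunction is included as it is used by the progression function). -/
inductive LTL (AP : Type) : Type where
  | tt : LTL AP
  | atom : AP → LTL AP
  | neg : LTL AP → LTL AP
  | conj : LTL AP → LTL AP → LTL AP
  | disj : LTL AP → LTL AP → LTL AP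
  | next : LTL AP → LTL AP
  | fut : LTL AP → LTL AP
  | glob : LTL AP → LTL AP
  | untl : LTL AP → LTL AP → LTL AP

namespace LTL

variable {AP : Type}

/-- Standard LTL semantics over infinite words `w : ℕ → (AP → Bool)` (an event is
a subset of `AP`, represented by its characteristic function): `Sat w φ i` means
`w, i ⊨ φ`. -/
def Sat (w : ℕ → (AP → Bool)) : LTL AP → ℕ → Prop
  | tt, _ => True
  | atom p, i => w i p = true
  | neg φ, i => ¬ Sat w φ i
  | conj φ ψ, i => Sat w φ i ∧ Sat w ψ i
  | disj φ ψ, i => Sat w φ i ∨ Sat w ψ i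
  | next φ, i => Sat w φ (i + 1)
  | fut φ, i => ∃ j, i ≤ j ∧ Sat w φ j
  | glob φ, i => ∀ j, i ≤ j → Sat w φ j
  | untl φ ψ, i => ∃ k, i ≤ k ∧ Sat w ψ k ∧ ∀ l, i ≤ l → l < k → Sat w φ l

end LTL

namespace LTL

/-- The formula-progression function: `prog φ σ` rewrites `φ` upon observing the
event `σ`. (`false` is expressed as `¬ true`.) -/
def prog (σ : AP → Bool) : LTL AP → LTL AP
  | tt => tt
  | atom p => if σ p then tt else neg tt
  | neg φ => neg (prog σ φ)
  | conj φ ψ => conj (prog σ φ) (prog σ ψ)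
  | disj φ ψ => disj (prog σ φ) (prog σ ψ)
  | next φ => φ
  | fut φ => disj (prog σ φ) (fut φ)
  | glob φ => conj (prog σ φ) (glob φ)
  | untl φ ψ => disj (prog σ ψ) (conj (prog σ φ) (untl φ ψ))

/-- The infinite word `σ·w`: `w` prefixed by the single event `σ`. -/
def consWord (σ : AP → Bool) (w : ℕ → AP → Bool) : ℕ → AP → Bool
  | 0 => σ
  | n + 1 => w n

end LTL


open LTL in
lemma sat_cons_shift {AP : Type} (φ : LTL AP) (σ : AP → Bool) (w : ℕ → AP → Bool) :
    ∀ i, Sat (consWord σ w) φ (i + 1) ↔ Sat w φ i := by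
  induction φ with
  | tt => intro i; simp [Sat]
  | atom p => intro i; simp [Sat, consWord]
  | neg φ ih => intro i; simp [Sat, ih]
  | conj φ ψ ih1 ih2 => intro i; simp [Sat, ih1, ih2]
  | disj φ ψ ih1 ih2 => intro i; simp [Sat, ih1, ih2]
  | next φ ih => intro i; exact ih (i + 1)
  | fut φ ih =>
    intro i
    constructor
    · rintro ⟨j, hij, hj⟩
      obtain ⟨j', rfl⟩ : ∃ j', j = j' + 1 := ⟨j - 1, by omega⟩
      exact ⟨j', by omega, (ih j').mp hj⟩
    · rintro ⟨j, hij, hj⟩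
      exact ⟨j + 1, by omega, (ih j).mpr hj⟩
  | glob φ ih =>
    intro i
    constructor
    · intro h j hij
      exact (ih j).mp (h (j + 1) (by omega))
    · intro h j hij
      obtain ⟨j', rfl⟩ : ∃ j', j = j' + 1 := ⟨j - 1, by omega⟩
      exact (ih j').mpr (h j' (by omega))
  | untl φ ψ ih1 ih2 =>
    intro i
    constructor
    · rintro ⟨k, hik, hk, hl⟩
      obtain ⟨k', rfl⟩ : ∃ k', k = k' + 1 := ⟨k - 1, by omega⟩
      exact ⟨k', by omega, (ih2 k').mp hk,
        fun l hil hlk => (ih1 l).mp (hl (l + 1) (by omega) (by omega))⟩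
    · rintro ⟨k, hik, hk, hl⟩
      refine ⟨k + 1, by omega, (ih2 k).mpr hk, fun l hil hlk => ?_⟩
      obtain ⟨l', rfl⟩ : ∃ l', l = l' + 1 := ⟨l - 1, by omega⟩
      exact (ih1 l').mpr (hl l' (by omega) (by omega))

open LTL in
/-- Soundness of LTL formula progression: `w ⊨ prog(φ, σ)` iff `σ·w ⊨ φ`. -/
theorem prog_sound {AP : Type} (φ : LTL AP) (σ : AP → Bool) (w : ℕ → AP → Bool) :
    Sat w (prog σ φ) 0 ↔ Sat (consWord σ w) φ 0 := by
  induction φ with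
  | tt => simp [Sat, prog]
  | atom p =>
    by_cases h : σ p = true <;> simp [Sat, prog, h, consWord]
  | neg φ ih => simp [Sat, prog, ih]
  | conj φ ψ ih1 ih2 => simp [Sat, prog, ih1, ih2]
  | disj φ ψ ih1 ih2 => simp [Sat, prog, ih1, ih2]
  | next φ ih =>
    show Sat w φ 0 ↔ Sat (consWord σ w) φ 1
    exact (sat_cons_shift φ σ w 0).symm
  | fut φ ih =>
    constructor
    · rintro (h | ⟨j, _, hj⟩)
      · exact ⟨0, le_refl _, ih.mp h⟩
      · exact ⟨j + 1, by omega, (sat_cons_shift φ σ w j).mpr hj⟩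
    · rintro ⟨j, _, hj⟩
      match j with
      | 0 => exact Or.inl (ih.mpr hj)
      | j + 1 => exact Or.inr ⟨j, by omega, (sat_cons_shift φ σ w j).mp hj⟩
  | glob φ ih =>
    constructor
    · rintro ⟨h0, h⟩ j _
      match j with
      | 0 => exact ih.mp h0
      | j + 1 => exact (sat_cons_shift φ σ w j).mpr (h j (by omega))
    · intro h
      exact ⟨ih.mpr (h 0 (le_refl _)),
        fun j _ => (sat_cons_shift φ σ w j).mp (h (j + 1) (by omega))⟩
  | untl φ ψ ih1 ih2 =>
    constructor
    · rintro (h | ⟨h0, k, _, hk, hl⟩)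
      · exact ⟨0, le_refl _, ih2.mp h, fun l _ hl => by omega⟩
      · refine ⟨k + 1, by omega, (sat_cons_shift ψ σ w k).mpr hk, fun l _ hlk => ?_⟩
        match l with
        | 0 => exact ih1.mp h0
        | l + 1 => exact (sat_cons_shift φ σ w l).mpr (hl l (by omega) (by omega))
    · rintro ⟨k, _, hk, hl⟩
      match k with
      | 0 => exact Or.inl (ih2.mpr hk)
      | k + 1 =>
        refine Or.inr ⟨ih1.mpr (hl 0 (by omega) (by omega)), ?_⟩
        exact ⟨k, by omega, (sat_cons_shift ψ σ w k).mp hk,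
          fun l _ hlk => (sat_cons_shift φ σ w l).mp (hl (l + 1) (by omega) (by omega))⟩
end
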